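/- Let I ⊆ ℝ be an open interval, t₀ ∈ I, p > 1, a > 0, b > 0, and Φ : I → [0,∞) continuous. Define f(x) = a - x + b x^p for x ≥ 0, let x̲ = (b p)^{-1/(p-1)} and b* = ((p-1)/p) x̲. Assume Φ(t₀) < x̲, a ≤ b*, and f(Φ(t)) > 0 for all t ∈ I. Then Φ(t) < x̲ for all t ∈ I. -/
import Mathlib


/-- continuity/bootstrap lemma (Lemma 5.2 of the paper). -/
theorem stmt_0 (I : Set ℝ) (hIopen : IsOpen I) (hIconn : I.OrdConnected)
    (t₀ : ℝ) (ht₀ : t₀ ∈ I) (p a b : ℝ) (hp : 1 < p) (ha : 0 < a) (hb : 0 < b)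
    (Φ : ℝ → ℝ) (hΦcont : ContinuousOn Φ I) (hΦnonneg : ∀ t ∈ I, 0 ≤ Φ t)
    (hΦt₀ : Φ t₀ < (b * p) ^ (-(1 / (p - 1)) : ℝ))
    (hab : a ≤ (p - 1) / p * (b * p) ^ (-(1 / (p - 1)) : ℝ))
    (hf : ∀ t ∈ I, 0 < a - Φ t + b * Φ t ^ p) :
    ∀ t ∈ I, Φ t < (b * p) ^ (-(1 / (p - 1)) : ℝ) := by
  set c : ℝ := (b * p) ^ (-(1 / (p - 1)) : ℝ) with hc
  have hp1 : (0:ℝ) < p - 1 := by linarith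
  have hp0 : (0:ℝ) < p := by linarith
  have hbp : 0 < b * p := by positivity
  have hcpos : 0 < c := Real.rpow_pos_of_pos hbp _
  -- c ^ (p-1) = (b p)⁻¹
  have h1 : c ^ (p - 1) = (b * p)⁻¹ := by
    rw [hc, ← Real.rpow_mul hbp.le]
    have : -(1 / (p - 1)) * (p - 1) = -1 := by field_simp
    rw [this, Real.rpow_neg_one]
  have h2 : c ^ p = c * c ^ (p - 1) := by
    rw [← Real.rpow_one_add' hcpos.le (by linarith)]
    ring_nf
  have hkey : b * c ^ p = c / p := by
    rw [h2, h1]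
    field_simp
  -- f(c) ≤ 0
  have hfc : a - c + b * c ^ p ≤ 0 := by
    have hc' : (p - 1) / p * c = c - c / p := by
      field_simp
    rw [hkey]
    rw [hc'] at hab
    linarith
  have hne : ∀ t ∈ I, Φ t ≠ c := by
    intro t ht h
    have := hf t ht
    rw [h] at this
    linarith
  intro t ht
  rcases lt_or_ge (Φ t) c with h | h
  · exact h
  · exfalso
    have hmem : c ∈ Set.Icc (Φ t₀) (Φ t) := ⟨hΦt₀.le, h⟩
    obtain ⟨s, hs, hsc⟩ := hIconn.isPreconnected.intermediate_value ht₀ ht hΦcont hmem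
    exact hne s hs hsc
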